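/- arXiv:2205.09961 — 8 statements merged into one kernel-verified Lean document; each statement's English description precedes it below -/
import Mathlib

section
/- Let V be a finite set and let S ⊆ ℤ^V be given in box–difference form, i.e., S = {p ∈ ℤ^V : α_i ≤ p_i ≤ β_i for all i ∈ V, and p_j − p_i ≤ γ_ij for all i, j ∈ V with i ≠ j}, where α_i ∈ ℤ ∪ {−∞}, β_i ∈ ℤ ∪ {+∞}, γ_ij ∈ ℤ ∪ {+∞}. If a real vector p ∈ ℝ^V satisfies all of these inequality constraints (with ℝ^V in place of ℤ^V), then the componentwise rounding ⌊p⌉ (nearest integer, with .5 rounded down) also satisfies all the constraints, i.e., ⌊p⌉ ∈ S. -/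
/-- Rounding a real number to the nearest integer, with ties
(fractional part exactly `0.5`) rounded down. -/
noncomputable def roundHalfDown (x : ℝ) : ℤ := ⌈x - 1 / 2⌉

/-- A real vector `p` satisfies the box–difference constraints given by
`α : V → ℤ ∪ {−∞}`, `β : V → ℤ ∪ {+∞}` and `γ : V × V → ℤ ∪ {+∞}`. -/
def SatisfiesReal {V : Type*} (α : V → WithBot ℤ) (β : V → WithTop ℤ)
    (γ : V → V → WithTop ℤ) (p : V → ℝ) : Prop :=
  (∀ i, (α i).map (Int.cast : ℤ → ℝ) ≤ (p i : WithBot ℝ)) ∧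
  (∀ i, ((p i : ℝ) : WithTop ℝ) ≤ (β i).map (Int.cast : ℤ → ℝ)) ∧
  (∀ i j, i ≠ j → ((p j - p i : ℝ) : WithTop ℝ) ≤ (γ i j).map (Int.cast : ℤ → ℝ))

/-- An integer vector `p` satisfies the box–difference constraints, i.e. belongs to the
set `S` in box–difference form. -/
def SatisfiesInt {V : Type*} (α : V → WithBot ℤ) (β : V → WithTop ℤ)
    (γ : V → V → WithTop ℤ) (p : V → ℤ) : Prop :=
  (∀ i, α i ≤ (p i : WithBot ℤ)) ∧
  (∀ i, ((p i : ℤ) : WithTop ℤ) ≤ β i) ∧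
  (∀ i j, i ≠ j → ((p j - p i : ℤ) : WithTop ℤ) ≤ γ i j)


lemma rhd_le {a : ℤ} {x : ℝ} (h : (a:ℝ) ≤ x) : a ≤ roundHalfDown x := by
  rw [roundHalfDown, Int.le_ceil_iff]
  push_cast
  linarith

lemma le_rhd {b : ℤ} {x : ℝ} (h : x ≤ (b:ℝ)) : roundHalfDown x ≤ b := by
  rw [roundHalfDown, Int.ceil_le]
  push_cast
  linarith

lemma rhd_sub {g : ℤ} {x y : ℝ} (h : x - y ≤ (g:ℝ)) :
    roundHalfDown x - roundHalfDown y ≤ g := by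
  have h1 : (roundHalfDown x : ℝ) < (x - 1/2) + 1 := Int.ceil_lt_add_one _
  have h2 : (y - 1/2 : ℝ) ≤ (roundHalfDown y : ℝ) := Int.le_ceil _
  have : ((roundHalfDown x - roundHalfDown y : ℤ) : ℝ) < (g:ℝ) + 1 := by
    push_cast; linarith
  have h3 : roundHalfDown x - roundHalfDown y < g + 1 := by exact_mod_cast this
  omega

/-- If a real vector satisfies all the box–difference constraints, then its componentwise
rounding (nearest integer, ties rounded down) lies in `S`. -/
theorem stmt0 {V : Type*} [Finite V] (α : V → WithBot ℤ) (β : V → WithTop ℤ)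
    (γ : V → V → WithTop ℤ) (p : V → ℝ) (hp : SatisfiesReal α β γ p) :
    SatisfiesInt α β γ (fun i => roundHalfDown (p i)) := by
  constructor
  · intro i
    cases hα : α i with
    | bot => exact bot_le
    | coe a =>
      have := hp.1 i
      rw [hα] at this
      simp only [WithBot.map_coe, WithBot.coe_le_coe] at this
      exact_mod_cast WithBot.coe_le_coe.mpr (rhd_le this)
  refine ⟨fun i => ?_, fun i j hij => ?_⟩
  · cases hβ : β i with
    | top => exact le_top
    | coe b =>
      have := hp.2.1 i
      rw [hβ] at this
      simp only [WithTop.map_coe, WithTop.coe_le_coe] at this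
      exact_mod_cast WithTop.coe_le_coe.mpr (le_rhd this)
  · cases hγ : γ i j with
    | top => exact le_top
    | coe g =>
      have := hp.2.2 i j hij
      rw [hγ] at this
      simp only [WithTop.map_coe, WithTop.coe_le_coe] at this
      exact_mod_cast WithTop.coe_le_coe.mpr (rhd_sub this)
end

section
/- Let G = (L ∪ R, E) be a bipartite graph with nonempty finite disjoint vertex sets L and R and edge set E ⊆ L × R, and let w ∈ ℤ^E. Let D = {(s, t) ∈ ℝ^L × ℝ^R : s_i − t_j ≥ w_ij for all (i, j) ∈ E}. Given (ŝ, t̂) ∈ ℝ^L × ℝ^R, let ε = max_{(i,j)∈E} (w_ij − ŝ_i + t̂_j) and suppose ε > 0. Then the point (ŝ + (ε/2)·𝟏, t̂ − (ε/2)·𝟏) belongs to D and minimizes the distance ‖(s, t) − (ŝ, t̂)‖∞^± over all (s, t) ∈ D; in particular this minimum distance equals ε. -/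
/-- `‖p‖∞⁺ = max_{i∈V} max{0, p_i}`. -/
noncomputable def normInfPlus {V : Type*} [Fintype V] [Nonempty V] (p : V → ℝ) : ℝ :=
  Finset.univ.sup' Finset.univ_nonempty fun i => max 0 (p i)

/-- `‖p‖∞⁻ = max_{i∈V} max{0, −p_i}`. -/
noncomputable def normInfMinus {V : Type*} [Fintype V] [Nonempty V] (p : V → ℝ) : ℝ :=
  Finset.univ.sup' Finset.univ_nonempty fun i => max 0 (-p i)

/-- `‖p‖∞^± = ‖p‖∞⁺ + ‖p‖∞⁻`. -/
noncomputable def normInfPM {V : Type*} [Fintype V] [Nonempty V] (p : V → ℝ) : ℝ :=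
  normInfPlus p + normInfMinus p

/-- `‖p‖∞ = max_{i∈V} |p_i|`. -/
noncomputable def normInf {V : Type*} [Fintype V] [Nonempty V] (p : V → ℝ) : ℝ :=
  Finset.univ.sup' Finset.univ_nonempty fun i => |p i|

lemma normInfPlus_ge {V : Type*} [Fintype V] [Nonempty V] (p : V → ℝ) (x : V) :
    p x ≤ normInfPlus p := by
  unfold normInfPlus
  exact le_trans (le_max_right 0 (p x))
    (Finset.le_sup' (fun i => max 0 (p i)) (Finset.mem_univ x))

lemma normInfMinus_ge {V : Type*} [Fintype V] [Nonempty V] (p : V → ℝ) (x : V) :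
    -p x ≤ normInfMinus p := by
  unfold normInfMinus
  exact le_trans (le_max_right 0 (-p x))
    (Finset.le_sup' (fun i => max 0 (-p i)) (Finset.mem_univ x))

/-- For the dual feasible region `D = {(s,t) : s_i − t_j ≥ w_{ij} for all (i,j) ∈ E}` of
weighted perfect bipartite matching, if `ε = max_{(i,j)∈E}(w_{ij} − ŝ_i + t̂_j) > 0`, then
`(ŝ + (ε/2)𝟏, t̂ − (ε/2)𝟏)` belongs to `D`, minimizes the `‖·‖∞^±`-distance to `(ŝ, t̂)`
over `D`, and this minimum distance equals `ε`. -/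
theorem stmt4 {L R : Type*} [Fintype L] [Fintype R] [Nonempty L] [Nonempty R]
    (E : Finset (L × R)) (hE : E.Nonempty) (w : L × R → ℤ)
    (shat : L → ℝ) (that : R → ℝ) (eps : ℝ)
    (heps : eps = E.sup' hE fun e => (w e : ℝ) - shat e.1 + that e.2)
    (heps_pos : 0 < eps) :
    (∀ e ∈ E, (shat e.1 + eps / 2) - (that e.2 - eps / 2) ≥ (w e : ℝ)) ∧
    (∀ (s : L → ℝ) (t : R → ℝ), (∀ e ∈ E, s e.1 - t e.2 ≥ (w e : ℝ)) →
      normInfPM (Sum.elim (fun i => (shat i + eps / 2) - shat i)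
          (fun j => (that j - eps / 2) - that j)) ≤
        normInfPM (Sum.elim (fun i => s i - shat i) (fun j => t j - that j))) ∧
    normInfPM (Sum.elim (fun i => (shat i + eps / 2) - shat i)
        (fun j => (that j - eps / 2) - that j)) = eps := by
  obtain ⟨i0⟩ := ‹Nonempty L›
  obtain ⟨j0⟩ := ‹Nonempty R›
  have hfeas : ∀ e ∈ E, (shat e.1 + eps / 2) - (that e.2 - eps / 2) ≥ (w e : ℝ) := by
    intro e he
    have h : (w e : ℝ) - shat e.1 + that e.2 ≤ eps :=
      heps ▸ Finset.le_sup' (fun e => (w e : ℝ) - shat e.1 + that e.2) he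
    linarith
  have hval : normInfPM (Sum.elim (fun i => (shat i + eps / 2) - shat i)
      (fun j => (that j - eps / 2) - that j)) = eps := by
    have hplus : normInfPlus (Sum.elim (fun i => (shat i + eps / 2) - shat i)
        (fun j => (that j - eps / 2) - that j)) = eps / 2 := by
      apply le_antisymm
      · apply Finset.sup'_le
        rintro (i | j) _ <;> simp <;> linarith
      · have := normInfPlus_ge (Sum.elim (fun i => (shat i + eps / 2) - shat i)
          (fun j => (that j - eps / 2) - that j)) (Sum.inl i0)
        simpa using this
    have hminus : normInfMinus (Sum.elim (fun i => (shat i + eps / 2) - shat i)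
        (fun j => (that j - eps / 2) - that j)) = eps / 2 := by
      apply le_antisymm
      · apply Finset.sup'_le
        rintro (i | j) _ <;> simp <;> linarith
      · have := normInfMinus_ge (Sum.elim (fun i => (shat i + eps / 2) - shat i)
          (fun j => (that j - eps / 2) - that j)) (Sum.inr j0)
        simpa using this
    rw [normInfPM, hplus, hminus]; ring
  refine ⟨hfeas, ?_, hval⟩
  intro s t hst
  rw [hval]
  obtain ⟨e, he, hmax⟩ := Finset.exists_mem_eq_sup' hE (fun e => (w e : ℝ) - shat e.1 + that e.2)
  have heq : eps = (w e : ℝ) - shat e.1 + that e.2 := heps.trans hmax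
  have hse : (w e : ℝ) ≤ s e.1 - t e.2 := hst e he
  have h1 : s e.1 - shat e.1 ≤ normInfPlus (Sum.elim (fun i => s i - shat i)
      (fun j => t j - that j)) := by
    simpa using normInfPlus_ge (Sum.elim (fun i => s i - shat i)
      (fun j => t j - that j)) (Sum.inl e.1)
  have h2 : -(t e.2 - that e.2) ≤ normInfMinus (Sum.elim (fun i => s i - shat i)
      (fun j => t j - that j)) := by
    simpa using normInfMinus_ge (Sum.elim (fun i => s i - shat i)
      (fun j => t j - that j)) (Sum.inr e.2)
  rw [normInfPM]
  linarith
end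

section
/- Let M be a matroid on a finite ground set V with nonempty base family B, and let v ∈ ℤ^V. Let B^v = argmax_{B∈B} v(B) be the set of maximum-v-weight bases, where v(B) = Σ_{i∈B} v_i. Then for every X ⊆ V, max_{B∈B^v} |X ∩ B| = max_{B∈B} (v + 𝟏_X)(B) − max_{B∈B} v(B), where 𝟏_X is the indicator vector of X. -/
/-- A matroid on a finite ground set `V`, given by its nonempty family of bases
satisfying the symmetric exchange axiom: for any bases `B₁, B₂` and `i ∈ B₁ \ B₂`
there is `j ∈ B₂ \ B₁` with `B₁ \ {i} ∪ {j}` and `B₂ \ {j} ∪ {i}` both bases. -/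
structure BaseFamily (V : Type*) [DecidableEq V] where
  bases : Finset (Finset V)
  nonempty : bases.Nonempty
  exchange : ∀ B₁ ∈ bases, ∀ B₂ ∈ bases, ∀ i ∈ B₁ \ B₂, ∃ j ∈ B₂ \ B₁,
    insert j (B₁.erase i) ∈ bases ∧ insert i (B₂.erase j) ∈ bases

/-- The maximum `v`-weight `max_{B ∈ B} v(B)` of a base. -/
def BaseFamily.maxWeight {V : Type*} [DecidableEq V] (M : BaseFamily V) (v : V → ℤ) : ℤ :=
  M.bases.sup' M.nonempty fun B => ∑ i ∈ B, v i

/-- The family `B^v = argmax_{B ∈ B} v(B)` of maximum-`v`-weight bases. -/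
def BaseFamily.argmax {V : Type*} [DecidableEq V] (M : BaseFamily V) (v : V → ℤ) :
    Finset (Finset V) :=
  M.bases.filter fun B => ∑ i ∈ B, v i = M.maxWeight v

lemma BaseFamily.argmax_nonempty {V : Type*} [DecidableEq V] (M : BaseFamily V) (v : V → ℤ) :
    (M.argmax v).Nonempty := by
  obtain ⟨B, hB, hEq⟩ := Finset.exists_mem_eq_sup' M.nonempty fun B : Finset V => ∑ i ∈ B, v i
  exact ⟨B, Finset.mem_filter.2 ⟨hB, hEq.symm⟩⟩

/-!
Choose `B ∈ B^v` meeting `X` in as many elements as possible. For `w = v + 𝟏_X`, no single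
exchange `B - j + i` increases the `w`-weight of `B`: it cannot increase the `v`-weight, and if
it keeps the `v`-weight it stays in `B^v`, so it cannot meet `X` more. By symmetric exchange,
a base that no single exchange improves is a maximum-weight base, so
`max_{B ∈ B} w(B) = w(B) = max_{B ∈ B} v(B) + |X ∩ B|`.
-/

open Finset

lemma sum_insert_erase_of_mem_of_notMem {V : Type*} [DecidableEq V] (f : V → ℤ)
    {B : Finset V} {i j : V} (hj : j ∈ B) (hi : i ∉ B) :
    ∑ x ∈ insert i (B.erase j), f x = ∑ x ∈ B, f x + f i - f j := by
  rw [sum_insert fun h => hi (mem_of_mem_erase h), sum_erase_eq_sub hj]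
  ring

lemma sum_add_indicator {V : Type*} [DecidableEq V] (v : V → ℤ) (X B : Finset V) :
    ∑ i ∈ B, (v i + if i ∈ X then 1 else 0) = ∑ i ∈ B, v i + (#(X ∩ B) : ℤ) := by
  rw [sum_add_distrib, sum_boole, filter_mem_eq_inter, inter_comm]

namespace BaseFamily

variable {V : Type*} [DecidableEq V] (M : BaseFamily V)

lemma eq_of_subset {B₁ B₂ : Finset V} (h₁ : B₁ ∈ M.bases) (h₂ : B₂ ∈ M.bases)
    (hsub : B₁ ⊆ B₂) : B₁ = B₂ := by
  refine hsub.antisymm fun i hi₂ => by_contra fun hi₁ => ?_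
  obtain ⟨j, hj, -⟩ := M.exchange B₂ h₂ B₁ h₁ i (mem_sdiff.2 ⟨hi₂, hi₁⟩)
  exact (mem_sdiff.1 hj).2 (hsub (mem_sdiff.1 hj).1)

/-- Induction on `|B' \ B|`: exchanging `i ∈ B' \ B` for the partner `j ∈ B \ B'` given by
symmetric exchange brings `B'` closer to `B` without decreasing its weight. -/
theorem sum_le_of_forall_exchange_le (w : V → ℤ) {B : Finset V} (hB : B ∈ M.bases)
    (hloc : ∀ i ∉ B, ∀ j ∈ B, insert i (B.erase j) ∈ M.bases → w i ≤ w j)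
    {B' : Finset V} (hB' : B' ∈ M.bases) : ∑ x ∈ B', w x ≤ ∑ x ∈ B, w x := by
  induction hn : #(B' \ B) using Nat.strong_induction_on generalizing B' with
  | _ n ih =>
  obtain hdiff | ⟨i, hi⟩ := (B' \ B).eq_empty_or_nonempty
  · rw [M.eq_of_subset hB' hB (sdiff_eq_empty_iff_subset.1 hdiff)]
  obtain ⟨j, hj, hB'ij, hBij⟩ := M.exchange B' hB' B hB i hi
  have hcard : #(insert j (B'.erase i) \ B) < n := by
    rw [← hn, insert_sdiff_of_mem _ (mem_sdiff.1 hj).1, erase_sdiff_comm]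
    exact card_erase_lt_of_mem hi
  rw [mem_sdiff] at hi hj
  have hstep := ih _ hcard hB'ij rfl
  rw [sum_insert_erase_of_mem_of_notMem w hi.1 hj.2] at hstep
  linarith [hloc i hi.2 j hj.1 hBij]

lemma sum_le_maxWeight (v : V → ℤ) {B : Finset V} (hB : B ∈ M.bases) :
    ∑ i ∈ B, v i ≤ M.maxWeight v :=
  le_sup' (fun B => ∑ i ∈ B, v i) hB

lemma mem_argmax {v : V → ℤ} {B : Finset V} :
    B ∈ M.argmax v ↔ B ∈ M.bases ∧ ∑ i ∈ B, v i = M.maxWeight v :=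
  mem_filter

theorem exists_mem_argmax_forall_sum_add_indicator_le (v : V → ℤ) (X : Finset V) :
    ∃ B ∈ M.argmax v, ∀ B' ∈ M.bases,
      ∑ i ∈ B', (v i + if i ∈ X then 1 else 0) ≤
        ∑ i ∈ B, (v i + if i ∈ X then 1 else 0) := by
  obtain ⟨B, hBarg, hBmax⟩ :=
    exists_max_image (M.argmax v) (fun B => #(X ∩ B)) (M.argmax_nonempty v)
  obtain ⟨hB, hBv⟩ := M.mem_argmax.1 hBarg
  refine ⟨B, hBarg, fun B' hB' => M.sum_le_of_forall_exchange_le _ hB ?_ hB'⟩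
  intro i hi j hj hBij
  have hv := sum_insert_erase_of_mem_of_notMem v hj hi
  have hvij : v i ≤ v j := by linarith [M.sum_le_maxWeight v hBij]
  obtain hlt | heq := hvij.lt_or_eq
  · split_ifs <;> omega
  · have hcard := hBmax _ (M.mem_argmax.2 ⟨hBij, by linarith⟩)
    have hw :=
      sum_insert_erase_of_mem_of_notMem (fun x => v x + if x ∈ X then 1 else 0) hj hi
    rw [sum_add_indicator, sum_add_indicator] at hw
    have : (#(X ∩ insert i (B.erase j)) : ℤ) ≤ #(X ∩ B) := by exact_mod_cast hcard
    linarith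

end BaseFamily

theorem stmt8_general {V : Type*} [DecidableEq V]
    (M : BaseFamily V) (v : V → ℤ) (X : Finset V) :
    (M.argmax v).sup' (M.argmax_nonempty v) (fun B => ((X ∩ B).card : ℤ)) =
      M.bases.sup' M.nonempty (fun B => ∑ i ∈ B, (v i + if i ∈ X then 1 else 0)) -
        M.maxWeight v := by
  refine le_antisymm (sup'_le _ _ fun B hB => ?_) ?_
  · obtain ⟨hB, hBv⟩ := M.mem_argmax.1 hB
    have := le_sup' (fun B => ∑ i ∈ B, (v i + if i ∈ X then 1 else 0)) hB
    rw [sum_add_indicator] at this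
    linarith
  · obtain ⟨B, hBarg, hBmax⟩ := M.exists_mem_argmax_forall_sum_add_indicator_le v X
    obtain ⟨hB, hBv⟩ := M.mem_argmax.1 hBarg
    have hsup : M.bases.sup' M.nonempty (fun B => ∑ i ∈ B, (v i + if i ∈ X then 1 else 0)) =
        ∑ i ∈ B, (v i + if i ∈ X then 1 else 0) :=
      (sup'_le _ _ hBmax).antisymm
        (le_sup' (fun B => ∑ i ∈ B, (v i + if i ∈ X then 1 else 0)) hB)
    rw [hsup, sum_add_indicator, hBv, add_sub_cancel_left]
    exact le_sup' (fun B => (#(X ∩ B) : ℤ)) hBarg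

/-- Rank-function of the matroid `M^v` of maximum-`v`-weight bases: for every `X ⊆ V`,
`max_{B ∈ B^v} |X ∩ B| = max_{B ∈ B} (v + 𝟏_X)(B) − max_{B ∈ B} v(B)`. -/
theorem stmt8 {V : Type*} [DecidableEq V] [Fintype V] [Nonempty V]
    (M : BaseFamily V) (v : V → ℤ) (X : Finset V) :
    (M.argmax v).sup' (M.argmax_nonempty v) (fun B => ((X ∩ B).card : ℤ)) =
      M.bases.sup' M.nonempty (fun B => ∑ i ∈ B, (v i + if i ∈ X then 1 else 0)) -
        M.maxWeight v :=
  stmt8_general M v X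
end

section
/- Let n ∈ ℕ be odd with n ≥ 3, V = {1, …, n}, and define the partition matroids M₁ = (V, B₁) and M₂ = (V, B₂) by B₁ = {B ⊆ V : 1 ∉ B and |B ∩ {i, i+1}| = 1 for every even i ∈ V} and B₂ = {B ⊆ V : n ∉ B and |B ∩ {i, i+1}| = 1 for every odd i < n}. Let W ∈ ℕ, W ≥ 1, and w ∈ ℤ^V with w_i = (−1)^{i+1} W. Then every p* ∈ ℤ^V minimizing g(p) = max_{B∈B₁} p(B) + max_{B∈B₂} (w − p)(B) over ℤ^V satisfies ‖p*‖∞ ≥ (n−1)W/2; i.e., the bound ‖p*‖∞ ≤ rW with r = (n−1)/2 is tight. -/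
/-!
Write `n = 2r + 1`. The potential `p₀ i = (r - 2⌊i/2⌋) W` is constant on every pair
`{2k, 2k+1}` of `M₁`, and `w - p₀` is constant on every pair `{2k-1, 2k}` of `M₂`. Summing over
the pairs, every base of `M₁` has `p₀`-weight `-rW` and every base of `M₂` has
`(w - p₀)`-weight `0`, so `g(p*) ≤ g(p₀) = -rW`. Conversely, evaluating `g(p)` at the bases
`{3, 5, …, n}` of `M₁` and `{1, 3, …, n - 2}` of `M₂` telescopes to `g(p) ≥ rW - (p₁ - pₙ)`.
Hence `p*₁ - p*ₙ ≥ 2rW`, and one of `|p*₁|`, `|p*ₙ|` is at least `rW`.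
-/

open Finset

theorem sum_range_two_mul_add_one (r : ℕ) : ∑ j ∈ range r, (2 * (j : ℤ) + 1) = r * r := by
  induction r with
  | zero => simp
  | succ k ih => rw [sum_range_succ, ih]; push_cast; ring

theorem sum_eq_of_card_inter_pair_eq_one {M : Type*} [AddCommMonoid M] {B : Finset ℕ}
    {a r : ℕ} {f : ℕ → M} (hB : B ⊆ Ico a (a + 2 * r))
    (hpair : ∀ j < r, (B ∩ {2 * j + a, 2 * j + a + 1}).card = 1)
    (hf : ∀ j < r, f (2 * j + a + 1) = f (2 * j + a)) :
    ∑ i ∈ B, f i = ∑ j ∈ range r, f (2 * j + a) := by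
  have hmaps : ∀ i ∈ B, (i - a) / 2 ∈ range r := fun i hi => by
    have := mem_Ico.1 (hB hi)
    rw [mem_range]
    omega
  rw [← sum_fiberwise_of_maps_to hmaps]
  refine sum_congr rfl fun j hj => ?_
  have hj : j < r := mem_range.1 hj
  have hfiber : {i ∈ B | (i - a) / 2 = j} = B ∩ {2 * j + a, 2 * j + a + 1} := by
    ext i
    simp only [mem_filter, mem_inter, mem_insert, mem_singleton]
    refine and_congr_right fun hi => ?_
    have := mem_Ico.1 (hB hi)
    omega
  obtain ⟨x, hx⟩ := card_eq_one.1 (hpair j hj)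
  have hx_pair : x = 2 * j + a ∨ x = 2 * j + a + 1 := by
    have : x ∈ B ∩ {2 * j + a, 2 * j + a + 1} := hx ▸ mem_singleton_self x
    simpa using (mem_inter.1 this).2
  rw [hfiber, hx, sum_singleton]
  rcases hx_pair with rfl | rfl
  · rfl
  · exact hf j hj

def IsBase₁ (n : ℕ) (B : Finset ℕ) : Prop :=
  B ⊆ Icc 1 n ∧ 1 ∉ B ∧ ∀ i ∈ Icc 1 n, Even i → (B ∩ {i, i + 1}).card = 1

def IsBase₂ (n : ℕ) (B : Finset ℕ) : Prop :=
  B ⊆ Icc 1 n ∧ n ∉ B ∧ ∀ i ∈ Icc 1 n, Odd i → i < n → (B ∩ {i, i + 1}).card = 1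

section Bases

variable {M : Type*} [AddCommMonoid M] {r : ℕ} {B : Finset ℕ} {f : ℕ → M}

theorem IsBase₁.sum_eq (hB : IsBase₁ (2 * r + 1) B)
    (hf : ∀ j < r, f (2 * j + 2 + 1) = f (2 * j + 2)) :
    ∑ i ∈ B, f i = ∑ j ∈ range r, f (2 * j + 2) := by
  obtain ⟨hsub, hone, hpair⟩ := hB
  refine sum_eq_of_card_inter_pair_eq_one (fun i hi => ?_)
    (fun j hj => hpair _ (mem_Icc.2 (by omega)) ⟨j + 1, by ring⟩) hf
  have := mem_Icc.1 (hsub hi)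
  have : i ≠ 1 := by rintro rfl; exact hone hi
  rw [mem_Ico]
  omega

theorem IsBase₂.sum_eq (hB : IsBase₂ (2 * r + 1) B)
    (hf : ∀ j < r, f (2 * j + 1 + 1) = f (2 * j + 1)) :
    ∑ i ∈ B, f i = ∑ j ∈ range r, f (2 * j + 1) := by
  obtain ⟨hsub, hlast, hpair⟩ := hB
  refine sum_eq_of_card_inter_pair_eq_one (fun i hi => ?_)
    (fun j hj => hpair _ (mem_Icc.2 (by omega)) ⟨j, rfl⟩ (by omega)) hf
  have := mem_Icc.1 (hsub hi)
  have : i ≠ 2 * r + 1 := by rintro rfl; exact hlast hi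
  rw [mem_Ico]
  omega

theorem isBase₁_image_two_mul_add_three (r : ℕ) :
    IsBase₁ (2 * r + 1) ((range r).image fun j => 2 * j + 3) := by
  refine ⟨fun x hx => ?_, fun h => ?_, fun i hi ⟨m, hm⟩ => ?_⟩
  · obtain ⟨j, hj, rfl⟩ := mem_image.1 hx
    rw [mem_Icc]
    have := mem_range.1 hj
    omega
  · obtain ⟨j, -, hj⟩ := mem_image.1 h
    omega
  · have hi := mem_Icc.1 hi
    have : (range r).image (fun j => 2 * j + 3) ∩ {i, i + 1} = {i + 1} := by
      ext x
      simp only [mem_inter, mem_image, mem_range, mem_insert, mem_singleton]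
      constructor
      · rintro ⟨⟨j, -, rfl⟩, hx⟩
        omega
      · rintro rfl
        exact ⟨⟨m - 1, by omega, by omega⟩, Or.inr rfl⟩
    rw [this, card_singleton]

theorem isBase₂_image_two_mul_add_one (r : ℕ) :
    IsBase₂ (2 * r + 1) ((range r).image fun j => 2 * j + 1) := by
  refine ⟨fun x hx => ?_, fun h => ?_, fun i hi ⟨m, hm⟩ hlt => ?_⟩
  · obtain ⟨j, hj, rfl⟩ := mem_image.1 hx
    rw [mem_Icc]
    have := mem_range.1 hj
    omega
  · obtain ⟨j, hj, hj'⟩ := mem_image.1 h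
    have := mem_range.1 hj
    omega
  · have : (range r).image (fun j => 2 * j + 1) ∩ {i, i + 1} = {i} := by
      ext x
      simp only [mem_inter, mem_image, mem_range, mem_insert, mem_singleton]
      constructor
      · rintro ⟨⟨j, -, rfl⟩, hx⟩
        omega
      · rintro rfl
        exact ⟨⟨m, by omega, by omega⟩, Or.inl rfl⟩
    rw [this, card_singleton]

end Bases

def dualObjective (B₁ B₂ : Finset (Finset ℕ)) (hne₁ : B₁.Nonempty) (hne₂ : B₂.Nonempty)
    (w p : ℕ → ℤ) : ℤ :=
  B₁.sup' hne₁ (fun B => ∑ i ∈ B, p i) + B₂.sup' hne₂ (fun B => ∑ i ∈ B, (w i - p i))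

def stepPotential (r : ℕ) (W : ℤ) (i : ℕ) : ℤ := (r - 2 * (i / 2 : ℕ)) * W

section Weights

variable {r : ℕ} {W : ℤ} {w : ℕ → ℤ} {B₁ B₂ : Finset (Finset ℕ)}
  {hne₁ : B₁.Nonempty} {hne₂ : B₂.Nonempty}

theorem weight_of_odd (hw : ∀ i ∈ Icc 1 (2 * r + 1), w i = (-1) ^ (i + 1) * W) {i : ℕ}
    (hi : i ≤ 2 * r + 1) (hodd : Odd i) : w i = W := by
  rw [hw i (mem_Icc.2 ⟨hodd.pos, hi⟩), hodd.add_one.neg_one_pow, one_mul]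

theorem weight_of_even (hw : ∀ i ∈ Icc 1 (2 * r + 1), w i = (-1) ^ (i + 1) * W) {i : ℕ}
    (hi₀ : 1 ≤ i) (hi : i ≤ 2 * r + 1) (heven : Even i) : w i = -W := by
  rw [hw i (mem_Icc.2 ⟨hi₀, hi⟩), heven.add_one.neg_one_pow, neg_one_mul]

theorem sum_stepPotential_of_isBase₁ {B : Finset ℕ} (hB : IsBase₁ (2 * r + 1) B) :
    ∑ i ∈ B, stepPotential r W i = -(r * W) := by
  have hconst : ∀ j < r, stepPotential r W (2 * j + 2 + 1) = stepPotential r W (2 * j + 2) :=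
    fun j _ => by
      rw [stepPotential, stepPotential, show (2 * j + 2 + 1) / 2 = (2 * j + 2) / 2 by omega]
  have hpair : ∀ j ∈ range r,
      stepPotential r W (2 * j + 2) = (r - 1) * W - (2 * j + 1) * W := by
    intro j _
    rw [stepPotential, show (2 * j + 2) / 2 = j + 1 by omega]
    push_cast
    ring
  rw [hB.sum_eq hconst, sum_congr rfl hpair, sum_sub_distrib, sum_const, card_range,
    nsmul_eq_mul, ← sum_mul, sum_range_two_mul_add_one]
  ring

theorem sum_sub_stepPotential_of_isBase₂
    (hw : ∀ i ∈ Icc 1 (2 * r + 1), w i = (-1) ^ (i + 1) * W) {B : Finset ℕ}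
    (hB : IsBase₂ (2 * r + 1) B) :
    ∑ i ∈ B, (w i - stepPotential r W i) = 0 := by
  have hodd_term : ∀ j < r,
      w (2 * j + 1) - stepPotential r W (2 * j + 1) = (2 * j + 1) * W - r * W := by
    intro j hj
    rw [weight_of_odd hw (by omega) ⟨j, rfl⟩, stepPotential, show (2 * j + 1) / 2 = j by omega]
    ring
  have heven_term : ∀ j < r, w (2 * j + 1 + 1) - stepPotential r W (2 * j + 1 + 1) =
      (2 * j + 1) * W - r * W := by
    intro j hj
    rw [weight_of_even hw (by omega) (by omega) ⟨j + 1, by ring⟩, stepPotential,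
      show (2 * j + 1 + 1) / 2 = j + 1 by omega]
    push_cast
    ring
  rw [hB.sum_eq fun j hj => (heven_term j hj).trans (hodd_term j hj).symm,
    sum_congr rfl fun j hj => hodd_term j (mem_range.1 hj), sum_sub_distrib, ← sum_mul,
    sum_range_two_mul_add_one, sum_const, card_range, nsmul_eq_mul]
  ring

theorem dualObjective_stepPotential_le (hB₁ : ∀ B ∈ B₁, IsBase₁ (2 * r + 1) B)
    (hB₂ : ∀ B ∈ B₂, IsBase₂ (2 * r + 1) B)
    (hw : ∀ i ∈ Icc 1 (2 * r + 1), w i = (-1) ^ (i + 1) * W) :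
    dualObjective B₁ B₂ hne₁ hne₂ w (stepPotential r W) ≤ -(r * W) := by
  have h₁ := sup'_le hne₁ (fun B => ∑ i ∈ B, stepPotential r W i)
    fun B hB => (sum_stepPotential_of_isBase₁ (W := W) (hB₁ B hB)).le
  have h₂ := sup'_le hne₂ (fun B => ∑ i ∈ B, (w i - stepPotential r W i))
    fun B hB => (sum_sub_stepPotential_of_isBase₂ hw (hB₂ B hB)).le
  rw [dualObjective]
  linarith

theorem sub_le_dualObjective (hB₁ : ∀ B, IsBase₁ (2 * r + 1) B → B ∈ B₁)
    (hB₂ : ∀ B, IsBase₂ (2 * r + 1) B → B ∈ B₂)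
    (hw : ∀ i ∈ Icc 1 (2 * r + 1), w i = (-1) ^ (i + 1) * W) (p : ℕ → ℤ) :
    r * W - (p 1 - p (2 * r + 1)) ≤ dualObjective B₁ B₂ hne₁ hne₂ w p := by
  have h₁ : ∑ i ∈ (range r).image (fun j => 2 * j + 3), p i ≤ B₁.sup' hne₁ _ :=
    le_sup' (fun B => ∑ i ∈ B, p i) (hB₁ _ (isBase₁_image_two_mul_add_three r))
  have h₂ : ∑ i ∈ (range r).image (fun j => 2 * j + 1), (w i - p i) ≤ B₂.sup' hne₂ _ :=
    le_sup' (fun B => ∑ i ∈ B, (w i - p i)) (hB₂ _ (isBase₂_image_two_mul_add_one r))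
  rw [sum_image fun x _ y _ h => by omega] at h₁ h₂
  have hodd : ∑ j ∈ range r, (w (2 * j + 1) - p (2 * j + 1)) =
      r * W - ∑ j ∈ range r, p (2 * j + 1) := by
    have hw_odd : ∀ j ∈ range r, w (2 * j + 1) - p (2 * j + 1) = W - p (2 * j + 1) :=
      fun j hj => by rw [weight_of_odd hw (by have := mem_range.1 hj; omega) ⟨j, rfl⟩]
    rw [sum_congr rfl hw_odd, sum_sub_distrib, sum_const, card_range, nsmul_eq_mul]
  have htelescope : ∑ j ∈ range r, p (2 * j + 1) - ∑ j ∈ range r, p (2 * j + 3) =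
      p 1 - p (2 * r + 1) := by
    rw [← sum_sub_distrib]
    exact sum_range_sub' (fun j => p (2 * j + 1)) r
  rw [dualObjective]
  linarith

end Weights

/-- Tightness of the bound `‖p*‖∞ ≤ rW` for the dual of weighted matroid intersection:
for the partition matroids `M₁ = (V, B₁)`, `M₂ = (V, B₂)` on `V = {1, …, n}` (`n` odd)
with `B₁ = {B ⊆ V : 1 ∉ B, |B ∩ {i, i+1}| = 1 for even i ∈ V}` and
`B₂ = {B ⊆ V : n ∉ B, |B ∩ {i, i+1}| = 1 for odd i < n}`, and weights
`w_i = (−1)^{i+1} W` with `W ≥ 1`, every minimizer `p*` of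
`g(p) = max_{B∈B₁} p(B) + max_{B∈B₂} (w − p)(B)` satisfies `‖p*‖∞ ≥ (n−1)W/2 = rW`. -/
theorem stmt11 (n : ℕ) (hodd : Odd n) (hn : 3 ≤ n)
    (W : ℤ) (w : ℕ → ℤ)
    (hw : ∀ i ∈ Finset.Icc 1 n, w i = (-1) ^ (i + 1) * W)
    (B₁ B₂ : Finset (Finset ℕ))
    (hB₁ : ∀ B : Finset ℕ, B ∈ B₁ ↔
      B ⊆ Finset.Icc 1 n ∧ 1 ∉ B ∧
        ∀ i ∈ Finset.Icc 1 n, Even i → (B ∩ {i, i + 1}).card = 1)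
    (hB₂ : ∀ B : Finset ℕ, B ∈ B₂ ↔
      B ⊆ Finset.Icc 1 n ∧ n ∉ B ∧
        ∀ i ∈ Finset.Icc 1 n, Odd i → i < n → (B ∩ {i, i + 1}).card = 1)
    (hne₁ : B₁.Nonempty) (hne₂ : B₂.Nonempty)
    (pstar : ℕ → ℤ)
    (hmin : ∀ p : ℕ → ℤ,
      B₁.sup' hne₁ (fun B => ∑ i ∈ B, pstar i) +
          B₂.sup' hne₂ (fun B => ∑ i ∈ B, (w i - pstar i)) ≤
        B₁.sup' hne₁ (fun B => ∑ i ∈ B, p i) +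
          B₂.sup' hne₂ (fun B => ∑ i ∈ B, (w i - p i))) :
    ((n : ℤ) - 1) / 2 * W ≤
      (Finset.Icc 1 n).sup' (Finset.nonempty_Icc.mpr (by omega)) fun i => |pstar i| := by
  obtain ⟨r, rfl⟩ := hodd
  have hupper : dualObjective B₁ B₂ hne₁ hne₂ w pstar ≤ -(r * W) :=
    (hmin _).trans (dualObjective_stepPotential_le (fun B => (hB₁ B).1) (fun B => (hB₂ B).1) hw)
  have hlower := sub_le_dualObjective (hne₁ := hne₁) (hne₂ := hne₂)
    (fun B => (hB₁ B).2) (fun B => (hB₂ B).2) hw pstar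
  have h₁ := le_sup' (fun i => |pstar i|) (left_mem_Icc.2 (by omega) : 1 ∈ Icc 1 (2 * r + 1))
  have h₂ := le_sup' (fun i => |pstar i|)
    (right_mem_Icc.2 (by omega) : 2 * r + 1 ∈ Icc 1 (2 * r + 1))
  rw [show (((2 * r + 1 : ℕ) : ℤ) - 1) / 2 = r by omega]
  linarith [le_abs_self (pstar 1), neg_le_abs (pstar (2 * r + 1))]
end

section
/- Let n ≥ 8 be even, let P_n be the path graph on vertices V = {1, …, n} with edges {i, i+1} for i = 1, …, n−1, and let C > 0. Assign edge costs c_{i,i+1} = C for odd i and c_{i,i+1} = 0 for even i ≤ n−2. Then every y ∈ ℝ^V that is feasible for the dual of the minimum-cost perfect matching problem (i.e., y_i + y_{i+1} ≤ c_{i,i+1} for all i = 1, …, n−1) and tight on the unique perfect matching (i.e., y_i + y_{i+1} = C for all odd i) satisfies y_1 ≥ y_{n−1} + (n/2 − 1)C; consequently ‖y‖∞ > C, so no optimal dual solution lies in [−C, C]^V. -/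
/-- Counterexample to the `[−C, C]` bound on dual solutions for minimum-cost perfect
bipartite matching on the path graph `P_n` (`n ≥ 8` even) with edge costs
`c_{i,i+1} = C` for odd `i` and `0` for even `i`: every dual feasible `y` that is tight on
the unique perfect matching satisfies `y_1 ≥ y_{n−1} + (n/2 − 1)C`, and hence `‖y‖∞ > C`. -/
theorem stmt12 (n : ℕ) (hn : Even n) (hn8 : 8 ≤ n) (C : ℝ) (hC : 0 < C)
    (c : ℕ → ℝ) (hc : ∀ i, c i = if Odd i then C else 0)
    (y : ℕ → ℝ)
    (hfeas : ∀ i, 1 ≤ i → i ≤ n - 1 → y i + y (i + 1) ≤ c i)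
    (htight : ∀ i, 1 ≤ i → i ≤ n - 1 → Odd i → y i + y (i + 1) = C) :
    y (n - 1) + ((n : ℝ) / 2 - 1) * C ≤ y 1 ∧
      C < (Finset.Icc 1 n).sup' (Finset.nonempty_Icc.mpr (by omega)) fun i => |y i| := by
  obtain ⟨m, hm⟩ := hn
  have hmn : n = 2 * m := by omega
  have key : ∀ k : ℕ, 2 * k + 1 ≤ n - 1 → y (2 * k + 1) + (k : ℝ) * C ≤ y 1 := by
    intro k
    induction k with
    | zero => intro _; simp
    | succ k ih =>
      intro hk
      have h1 : 2 * k + 1 ≤ n - 1 := by omega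
      have ht := htight (2 * k + 1) (by omega) h1 ⟨k, by ring⟩
      have hf := hfeas (2 * k + 2) (by omega) (by omega)
      rw [hc (2 * k + 2)] at hf
      have hodd : ¬ Odd (2 * k + 2) := by simp [Nat.odd_iff, Nat.add_mod]
      rw [if_neg hodd] at hf
      have ihk := ih h1
      have : y (2 * (k + 1) + 1) + C ≤ y (2 * k + 1) := by
        have : (2 * k + 1) + 1 = 2 * k + 2 := by ring
        have h2 : 2 * (k + 1) + 1 = (2 * k + 2) + 1 := by ring
        rw [h2]
        nlinarith [ht, hf]
      push_cast
      nlinarith [ihk, this]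
  have hk3 : 3 ≤ m - 1 := by omega
  have hmain := key (m - 1) (by omega)
  have hcast : ((m : ℝ) - 1) = ((m - 1 : ℕ) : ℝ) := by
    have : 1 ≤ m := by omega
    push_cast [this]; ring
  have hnm : 2 * (m - 1) + 1 = n - 1 := by omega
  rw [hnm] at hmain
  have hhalf : (n : ℝ) / 2 - 1 = ((m - 1 : ℕ) : ℝ) := by
    rw [hmn]; push_cast [show 1 ≤ m by omega]; ring
  constructor
  · rw [hhalf]; exact hmain
  · set S := (Finset.Icc 1 n).sup' (Finset.nonempty_Icc.mpr (by omega)) fun i => |y i| with hS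
    have h1S : |y 1| ≤ S := Finset.le_sup' (fun i => |y i|) (show 1 ∈ Finset.Icc 1 n from Finset.mem_Icc.mpr ⟨by omega, by omega⟩)
    have h2S : |y (n - 1)| ≤ S := Finset.le_sup' (fun i => |y i|) (show n - 1 ∈ Finset.Icc 1 n from Finset.mem_Icc.mpr ⟨by omega, by omega⟩)
    have hmC : (3 : ℝ) ≤ ((m - 1 : ℕ) : ℝ) := by exact_mod_cast hk3
    have h3 : y (n - 1) + 3 * C ≤ y 1 := by nlinarith [hmain]
    have ha : y 1 ≤ |y 1| := le_abs_self _
    have hb : -y (n - 1) ≤ |y (n - 1)| := neg_le_abs _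
    nlinarith
end

section
/- Let V be a nonempty finite set and let g : ℤ^V → ℝ ∪ {+∞} be a proper L♮-convex function, i.e., g(p) + g(q) ≥ g(⌈(p+q)/2⌉) + g(⌊(p+q)/2⌋) for all p, q ∈ ℤ^V, where ⌈·⌉ and ⌊·⌋ are taken componentwise. Then for every p ∈ ℤ^V with g(p) < +∞: p is a global minimizer of g over ℤ^V if and only if g(p) ≤ g(p + d) for every d ∈ {0, +1}^V ∪ {0, −1}^V (equivalently, g(p) ≤ g(p + 𝟏_X) and g(p) ≤ g(p − 𝟏_X) for every X ⊆ V). -/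
/-- Componentwise `⌈(p+q)/2⌉`. -/
noncomputable def ceilMid {V : Type*} (p q : V → ℤ) : V → ℤ :=
  fun i => ⌈((p i + q i : ℤ) : ℚ) / 2⌉

/-- Componentwise `⌊(p+q)/2⌋`. -/
noncomputable def floorMid {V : Type*} (p q : V → ℤ) : V → ℤ :=
  fun i => ⌊((p i + q i : ℤ) : ℚ) / 2⌋

lemma floor_half_int (a : ℤ) : ⌊((a : ℚ)) / 2⌋ = a / 2 := by
  have := Rat.floor_intCast_div_natCast a 2
  simpa using this

lemma ceil_half_int (a : ℤ) : ⌈((a : ℚ)) / 2⌉ = (a + 1) / 2 := by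
  have h : ((a : ℚ)) / 2 = -(((-a : ℤ) : ℚ) / 2) := by push_cast; ring
  rw [h, Int.ceil_neg, floor_half_int]
  omega

lemma floorMid_eq {V : Type*} (p q : V → ℤ) (i : V) :
    floorMid p q i = (p i + q i) / 2 := floor_half_int _

lemma ceilMid_eq {V : Type*} (p q : V → ℤ) (i : V) :
    ceilMid p q i = (p i + q i + 1) / 2 := ceil_half_int _

/-- For a proper L♮-convex function `g : ℤ^V → ℝ ∪ {+∞}` (discrete midpoint convexity)
and any `p` with `g(p) < +∞`: `p` is a global minimizer of `g` iff
`g(p) ≤ g(p + d)` for every `d ∈ {0, +1}^V ∪ {0, −1}^V`. -/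
theorem stmt16 {V : Type*} [Fintype V] [Nonempty V] (g : (V → ℤ) → WithTop ℝ)
    (hproper : ∃ p, g p ≠ ⊤)
    (hLnat : ∀ p q : V → ℤ, g (ceilMid p q) + g (floorMid p q) ≤ g p + g q)
    (p : V → ℤ) (hp : g p ≠ ⊤) :
    (∀ q : V → ℤ, g p ≤ g q) ↔
      ∀ d : V → ℤ, ((∀ i, d i = 0 ∨ d i = 1) ∨ (∀ i, d i = 0 ∨ d i = -1)) →
        g p ≤ g (fun i => p i + d i) := by
  constructor
  · intro h d _
    exact h _
  · intro hloc
    -- strong induction on the sup-norm of q - p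
    have key : ∀ k : ℕ, ∀ q : V → ℤ, (∀ i, (q i - p i).natAbs ≤ k) → g p ≤ g q := by
      intro k
      induction k using Nat.strong_induction_on with
      | _ k IH =>
        intro q hq
        rcases Nat.eq_zero_or_pos k with hk0 | hkpos
        · subst hk0
          have : q = p := by
            funext i
            have := hq i
            omega
          rw [this]
        · -- k ≥ 1
          set mP := ceilMid p q with hmP
          set mM := floorMid p q with hmM
          have hup : g p ≤ g mP ∧ g p ≤ g mM := by
            rcases Nat.lt_or_ge 1 k with hk2 | hk1
            · -- k ≥ 2 : use induction hypothesis with k - 1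
              constructor
              · refine IH (k - 1) (by omega) mP ?_
                intro i
                have h1 := hq i
                have h2 : mP i = (p i + q i + 1) / 2 := ceilMid_eq p q i
                omega
              · refine IH (k - 1) (by omega) mM ?_
                intro i
                have h1 := hq i
                have h2 : mM i = (p i + q i) / 2 := floorMid_eq p q i
                omega
            · -- k = 1 : use local optimality
              constructor
              · have := hloc (fun i => mP i - p i) ?_
                · simpa using this
                · left
                  intro i
                  beta_reduce
                  have h1 := hq i
                  have h2 : mP i = (p i + q i + 1) / 2 := ceilMid_eq p q i
                  omega
              · have := hloc (fun i => mM i - p i) ?_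
                · simpa using this
                · right
                  intro i
                  beta_reduce
                  have h1 := hq i
                  have h2 : mM i = (p i + q i) / 2 := floorMid_eq p q i
                  omega
          have hsum : g p + g p ≤ g p + g q :=
            le_trans (add_le_add hup.1 hup.2) (hLnat p q)
          exact (WithTop.add_le_add_iff_left hp).mp hsum
    intro q
    exact key (Finset.univ.sup fun i => (q i - p i).natAbs) q
      (fun i => Finset.le_sup (f := fun i => (q i - p i).natAbs) (Finset.mem_univ i))
end

section
/- Let V be a nonempty finite set and S ⊆ ℤ^V nonempty. Then S is an L♮-convex set — i.e., for all p, q ∈ S, both ⌈(p+q)/2⌉ ∈ S and ⌊(p+q)/2⌋ ∈ S (componentwise ceiling and floor) — if and only if S is in box–difference form: there exist α_i ∈ ℤ ∪ {−∞}, β_i ∈ ℤ ∪ {+∞}, and γ_ij ∈ ℤ ∪ {+∞} (i, j ∈ V, i ≠ j) such that S = {p ∈ ℤ^V : α_i ≤ p_i ≤ β_i for all i, and p_j − p_i ≤ γ_ij for all i ≠ j}. -/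
lemma cm_spec (n : ℤ) : n ≤ 2 * ⌈(n:ℚ)/2⌉ ∧ 2 * ⌈(n:ℚ)/2⌉ ≤ n + 1 := by
  constructor
  · have h := Int.le_ceil ((n:ℚ)/2)
    have h2 : (n:ℚ) ≤ 2 * (⌈(n:ℚ)/2⌉ : ℚ) := by linarith
    exact_mod_cast h2
  · have h := Int.ceil_lt_add_one ((n:ℚ)/2)
    have h2 : 2 * (⌈(n:ℚ)/2⌉ : ℚ) < n + 2 := by linarith
    have h3 : 2 * ⌈(n:ℚ)/2⌉ < n + 2 := by exact_mod_cast h2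
    omega

lemma fm_spec (n : ℤ) : n - 1 ≤ 2 * ⌊(n:ℚ)/2⌋ ∧ 2 * ⌊(n:ℚ)/2⌋ ≤ n := by
  constructor
  · have h := Int.lt_floor_add_one ((n:ℚ)/2)
    have h2 : (n:ℚ) < 2 * (⌊(n:ℚ)/2⌋ : ℚ) + 2 := by linarith
    have h3 : n < 2 * ⌊(n:ℚ)/2⌋ + 2 := by exact_mod_cast h2
    omega
  · have h := Int.floor_le ((n:ℚ)/2)
    have h2 : 2 * (⌊(n:ℚ)/2⌋ : ℚ) ≤ n := by linarith
    exact_mod_cast h2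

lemma ceilMid_apply {V : Type*} (p q : V → ℤ) (i : V) :
    ceilMid p q i = ⌈((p i + q i : ℤ) : ℚ)/2⌉ := rfl

lemma floorMid_apply {V : Type*} (p q : V → ℤ) (i : V) :
    floorMid p q i = ⌊((p i + q i : ℤ) : ℚ)/2⌋ := rfl

section SetLemmas

variable {W : Type*} [Fintype W] {T : Set (W → ℤ)}

def MidClosed (T : Set (W → ℤ)) : Prop :=
  ∀ p ∈ T, ∀ q ∈ T, ceilMid p q ∈ T ∧ floorMid p q ∈ T

lemma chi_up (hT : MidClosed T) :
    ∀ (n : ℕ) (Q s : W → ℤ), Q ∈ T → s ∈ T → (∑ i, (s i - Q i).natAbs) ≤ n →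
      (fun i => if Q i < s i then Q i + 1 else Q i) ∈ T := by
  intro n
  induction n with
  | zero =>
    intro Q s hQ hs hsum
    have hz : ∀ i, s i = Q i := by
      intro i
      have h1 := Finset.sum_eq_zero_iff.mp (Nat.le_zero.mp hsum) i (Finset.mem_univ i)
      omega
    have he : (fun i => if Q i < s i then Q i + 1 else Q i) = Q := by
      funext i; rw [hz i]; simp
    rw [he]; exact hQ
  | succ n ih =>
    intro Q s hQ hs hsum
    by_cases hc : ∀ i, Q i ≤ s i ∧ s i ≤ Q i + 1
    · have he : (fun i => if Q i < s i then Q i + 1 else Q i) = ceilMid Q s := by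
        funext i
        rw [ceilMid_apply]
        have hm := cm_spec (Q i + s i)
        have h1 := (hc i).1
        have h2 := (hc i).2
        split_ifs with h <;> omega
      rw [he]; exact (hT Q hQ s hs).1
    · push_neg at hc
      obtain ⟨i₀, hi₀⟩ := hc
      have hs'T : ceilMid Q s ∈ T := (hT Q hQ s hs).1
      have key : ∀ i, ceilMid Q s i = ⌈((Q i + s i : ℤ) : ℚ)/2⌉ := fun i => rfl
      have heq : (fun i => if Q i < s i then Q i + 1 else Q i)
          = (fun i => if Q i < ceilMid Q s i then Q i + 1 else Q i) := by
        funext i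
        have hm := cm_spec (Q i + s i)
        rw [key i]
        by_cases h : Q i < s i
        · rw [if_pos h, if_pos (by omega)]
        · rw [if_neg h, if_neg (by omega)]
      rw [heq]
      apply ih Q (ceilMid Q s) hQ hs'T
      have hlt : (∑ i, (ceilMid Q s i - Q i).natAbs) < ∑ i, (s i - Q i).natAbs := by
        apply Finset.sum_lt_sum
        · intro i _
          have hm := cm_spec (Q i + s i)
          rw [key i]; omega
        · refine ⟨i₀, Finset.mem_univ _, ?_⟩
          have hm := cm_spec (Q i₀ + s i₀)
          rw [key i₀]; omega
      omega

lemma chi_down (hT : MidClosed T) :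
    ∀ (n : ℕ) (Q s : W → ℤ), Q ∈ T → s ∈ T → (∑ i, (s i - Q i).natAbs) ≤ n →
      (fun i => if s i < Q i then Q i - 1 else Q i) ∈ T := by
  intro n
  induction n with
  | zero =>
    intro Q s hQ hs hsum
    have hz : ∀ i, s i = Q i := by
      intro i
      have h1 := Finset.sum_eq_zero_iff.mp (Nat.le_zero.mp hsum) i (Finset.mem_univ i)
      omega
    have he : (fun i => if s i < Q i then Q i - 1 else Q i) = Q := by
      funext i; rw [hz i]; simp
    rw [he]; exact hQ
  | succ n ih =>
    intro Q s hQ hs hsum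
    by_cases hc : ∀ i, Q i - 1 ≤ s i ∧ s i ≤ Q i
    · have he : (fun i => if s i < Q i then Q i - 1 else Q i) = floorMid Q s := by
        funext i
        rw [floorMid_apply]
        have hm := fm_spec (Q i + s i)
        have h1 := (hc i).1
        have h2 := (hc i).2
        split_ifs with h <;> omega
      rw [he]; exact (hT Q hQ s hs).2
    · push_neg at hc
      obtain ⟨i₀, hi₀⟩ := hc
      have hs'T : floorMid Q s ∈ T := (hT Q hQ s hs).2
      have key : ∀ i, floorMid Q s i = ⌊((Q i + s i : ℤ) : ℚ)/2⌋ := fun i => rfl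
      have heq : (fun i => if s i < Q i then Q i - 1 else Q i)
          = (fun i => if floorMid Q s i < Q i then Q i - 1 else Q i) := by
        funext i
        have hm := fm_spec (Q i + s i)
        rw [key i]
        by_cases h : s i < Q i
        · rw [if_pos h, if_pos (by omega)]
        · rw [if_neg h, if_neg (by omega)]
      rw [heq]
      apply ih Q (floorMid Q s) hQ hs'T
      have hlt : (∑ i, (floorMid Q s i - Q i).natAbs) < ∑ i, (s i - Q i).natAbs := by
        apply Finset.sum_lt_sum
        · intro i _
          have hm := fm_spec (Q i + s i)
          rw [key i]; omega
        · refine ⟨i₀, Finset.mem_univ _, ?_⟩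
          have hm := fm_spec (Q i₀ + s i₀)
          rw [key i₀]; omega
      omega

end SetLemmas

section SetLemmas2

variable {W : Type*} [Fintype W] {T : Set (W → ℤ)}

lemma sup_mem (hT : MidClosed T) :
    ∀ (n : ℕ) (x s : W → ℤ), x ∈ T → s ∈ T → (∑ i, (s i - x i).toNat) ≤ n →
      x ⊔ s ∈ T := by
  intro n
  induction n with
  | zero =>
    intro x s hx hs hsum
    have hle : ∀ i, s i ≤ x i := by
      intro i
      have h1 := Finset.sum_eq_zero_iff.mp (Nat.le_zero.mp hsum) i (Finset.mem_univ i)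
      omega
    rwa [sup_eq_left.mpr hle]
  | succ n ih =>
    intro x s hx hs hsum
    by_cases hc : ∀ i, s i ≤ x i
    · rwa [sup_eq_left.mpr hc]
    · push_neg at hc
      obtain ⟨i₀, hi₀⟩ := hc
      have hx'T : (fun i => if x i < s i then x i + 1 else x i) ∈ T :=
        chi_up hT _ x s hx hs le_rfl
      have he : (fun i => if x i < s i then x i + 1 else x i) ⊔ s = x ⊔ s := by
        funext i
        show (if x i < s i then x i + 1 else x i) ⊔ s i = x i ⊔ s i
        by_cases h : x i < s i
        · rw [if_pos h, sup_eq_right.mpr (by omega : x i + 1 ≤ s i),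
            sup_eq_right.mpr (le_of_lt h)]
        · rw [if_neg h]
      rw [← he]
      apply ih _ s hx'T hs
      have hlt : (∑ i, (s i - (if x i < s i then x i + 1 else x i)).toNat)
          < ∑ i, (s i - x i).toNat := by
        apply Finset.sum_lt_sum
        · intro i _
          split_ifs <;> omega
        · refine ⟨i₀, Finset.mem_univ _, ?_⟩
          rw [if_pos hi₀]; omega
      calc (∑ i, (s i - (fun i => if x i < s i then x i + 1 else x i) i).toNat)
          = ∑ i, (s i - (if x i < s i then x i + 1 else x i)).toNat := rfl
        _ ≤ n := by omega

lemma inf_mem (hT : MidClosed T) :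
    ∀ (n : ℕ) (x s : W → ℤ), x ∈ T → s ∈ T → (∑ i, (x i - s i).toNat) ≤ n →
      x ⊓ s ∈ T := by
  intro n
  induction n with
  | zero =>
    intro x s hx hs hsum
    have hle : ∀ i, x i ≤ s i := by
      intro i
      have h1 := Finset.sum_eq_zero_iff.mp (Nat.le_zero.mp hsum) i (Finset.mem_univ i)
      omega
    rwa [inf_eq_left.mpr hle]
  | succ n ih =>
    intro x s hx hs hsum
    by_cases hc : ∀ i, x i ≤ s i
    · rwa [inf_eq_left.mpr hc]
    · push_neg at hc
      obtain ⟨i₀, hi₀⟩ := hc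
      have hx'T : (fun i => if s i < x i then x i - 1 else x i) ∈ T :=
        chi_down hT _ x s hx hs le_rfl
      have he : (fun i => if s i < x i then x i - 1 else x i) ⊓ s = x ⊓ s := by
        funext i
        show (if s i < x i then x i - 1 else x i) ⊓ s i = x i ⊓ s i
        by_cases h : s i < x i
        · rw [if_pos h, inf_eq_right.mpr (by omega : s i ≤ x i - 1),
            inf_eq_right.mpr (le_of_lt h)]
        · rw [if_neg h]
      rw [← he]
      apply ih _ s hx'T hs
      have hlt : (∑ i, ((if s i < x i then x i - 1 else x i) - s i).toNat)
          < ∑ i, (x i - s i).toNat := by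
        apply Finset.sum_lt_sum
        · intro i _
          split_ifs <;> omega
        · refine ⟨i₀, Finset.mem_univ _, ?_⟩
          rw [if_pos hi₀]; omega
      calc (∑ i, ((fun i => if s i < x i then x i - 1 else x i) i - s i).toNat)
          = ∑ i, ((if s i < x i then x i - 1 else x i) - s i).toNat := rfl
        _ ≤ n := by omega

lemma inf_bin (hT : MidClosed T) {x s : W → ℤ} (hx : x ∈ T) (hs : s ∈ T) :
    x ⊓ s ∈ T := inf_mem hT _ x s hx hs le_rfl

lemma sup_bin (hT : MidClosed T) {x s : W → ℤ} (hx : x ∈ T) (hs : s ∈ T) :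
    x ⊔ s ∈ T := sup_mem hT _ x s hx hs le_rfl

lemma inf'_mem (hT : MidClosed T) {ι : Type*} (t : Finset ι) (ht : t.Nonempty)
    (f : ι → W → ℤ) (hf : ∀ i ∈ t, f i ∈ T) :
    (fun k => t.inf' ht fun i => f i k) ∈ T := by
  induction ht using Finset.Nonempty.cons_induction with
  | singleton a =>
    have he : (fun k => ({a} : Finset ι).inf' (Finset.singleton_nonempty _) fun i => f i k)
        = f a := by
      funext k; simp
    rw [he]; exact hf a (Finset.mem_singleton_self a)
  | cons a s h hs ih =>
    have he : (fun k => (Finset.cons a s h).inf' (Finset.cons_nonempty h) fun i => f i k)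
        = f a ⊓ (fun k => s.inf' hs fun i => f i k) := by
      funext k
      rw [Finset.inf'_cons]
      rfl
    rw [he]
    exact inf_bin hT (hf a (Finset.mem_cons_self a s))
      (ih fun i hi => hf i (Finset.mem_cons_of_mem hi))

end SetLemmas2

section Main

variable {W : Type*} [Fintype W]

theorem lcl {T : Set (W → ℤ)} (hT : MidClosed T)
    (htr : ∀ s ∈ T, ∀ c : ℤ, (fun i => s i + c) ∈ T) (hne : T.Nonempty)
    (P : W → ℤ) (hP : ∀ i j : W, i ≠ j → ∃ s ∈ T, P j - P i ≤ s j - s i) :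
    P ∈ T := by
  classical
  obtain ⟨t, ht⟩ := hne
  set M : ℤ := ((Finset.univ.sup fun i => (t i - P i).toNat : ℕ) : ℤ) with hM
  have hQ0 : (fun i => t i + (-M)) ∈ T := htr t ht (-M)
  have hQ0le : ∀ i, t i + (-M) ≤ P i := by
    intro i
    have h1 : (t i - P i).toNat ≤ Finset.univ.sup fun i => (t i - P i).toNat :=
      Finset.le_sup (f := fun i => (t i - P i).toNat) (Finset.mem_univ i)
    have h2 : t i - P i ≤ ((t i - P i).toNat : ℤ) := Int.self_le_toNat _
    have h3 : (((t i - P i).toNat : ℕ) : ℤ) ≤ M := by rw [hM]; exact_mod_cast h1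
    omega
  have main : ∀ n : ℕ, ∀ Q, Q ∈ T → (∀ i, Q i ≤ P i) → (∑ i, (P i - Q i).toNat) ≤ n →
      P ∈ T := by
    intro n
    induction n with
    | zero =>
      intro Q hQ hle hsum
      have hQP : Q = P := by
        funext i
        have h1 := Finset.sum_eq_zero_iff.mp (Nat.le_zero.mp hsum) i (Finset.mem_univ i)
        have h2 := hle i
        omega
      rwa [hQP] at hQ
    | succ n ih =>
      intro Q hQ hle hsum
      by_cases hq : ∀ i, P i ≤ Q i
      · have hQP : Q = P := funext fun i => le_antisymm (hle i) (hq i)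
        rwa [hQP] at hQ
      · push_neg at hq
        obtain ⟨j, hj⟩ := hq
        have hwit : ∀ i : W, ∃ w, w ∈ T ∧ Q j + 1 ≤ w j ∧ (Q i = P i → w i ≤ Q i) := by
          intro i
          by_cases hip : Q i = P i
          · have hij : i ≠ j := by
              intro h; rw [h] at hip; omega
            obtain ⟨u, hu, hdiff⟩ := hP i j hij
            refine ⟨fun k => u k + (Q i - u i), htr u hu _, ?_, fun _ => by simp⟩
            show Q j + 1 ≤ u j + (Q i - u i)
            have := hle i
            omega
          · exact ⟨fun k => Q k + 1, htr Q hQ 1, le_rfl, fun h => absurd h hip⟩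
        choose w hwT hwj hwE using hwit
        have hneO : (Finset.univ : Finset (Option W)).Nonempty := ⟨none, Finset.mem_univ _⟩
        set f : Option W → (W → ℤ) := fun o => o.elim (fun k => Q k + 1) w with hf
        have hfT : ∀ o ∈ (Finset.univ : Finset (Option W)), f o ∈ T := by
          intro o _
          cases o with
          | none => exact htr Q hQ 1
          | some i => exact hwT i
        set wm : W → ℤ := fun k => Finset.univ.inf' hneO (fun o => f o k) with hwm
        have hwmT : wm ∈ T := inf'_mem hT _ hneO f hfT
        have hwmj : Q j + 1 ≤ wm j := by
          rw [hwm]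
          apply Finset.le_inf'
          intro o _
          cases o with
          | none => exact le_rfl
          | some i => exact hwj i
        have hwmE : ∀ i, Q i = P i → wm i ≤ Q i := by
          intro i hip
          have h1 : wm i ≤ f (some i) i := by
            rw [hwm]; exact Finset.inf'_le _ (Finset.mem_univ _)
          exact le_trans h1 (hwE i hip)
        have hzT : (fun i => if Q i < wm i then Q i + 1 else Q i) ∈ T :=
          chi_up hT _ Q wm hQ hwmT le_rfl
        have hzle : ∀ i, (if Q i < wm i then Q i + 1 else Q i) ≤ P i := by
          intro i
          by_cases hip : Q i = P i
          · have := hwmE i hip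
            rw [if_neg (by omega)]; omega
          · have h1 := hle i
            split_ifs <;> omega
        have hzsum : (∑ i, (P i - (if Q i < wm i then Q i + 1 else Q i)).toNat) ≤ n := by
          have hlt : (∑ i, (P i - (if Q i < wm i then Q i + 1 else Q i)).toNat)
              < ∑ i, (P i - Q i).toNat := by
            apply Finset.sum_lt_sum
            · intro i _
              split_ifs <;> omega
            · refine ⟨j, Finset.mem_univ _, ?_⟩
              rw [if_pos (by omega)]
              omega
          omega
        exact ih _ hzT hzle hzsum
  exact main _ _ hQ0 hQ0le le_rfl

open scoped Classical in
noncomputable def gammaOf (T : Set (W → ℤ)) (i j : W) : WithTop ℤ :=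
  if h : (∃ d : ℤ, ∃ s ∈ T, s j - s i = d) ∧ (∃ b : ℤ, ∀ s ∈ T, s j - s i ≤ b) then
    (((Int.exists_greatest_of_bdd
      (P := fun d => ∃ s ∈ T, s j - s i = d)
      (by obtain ⟨b, hb⟩ := h.2; exact ⟨b, fun z hz => by obtain ⟨s, hs, hsz⟩ := hz; exact hsz ▸ hb s hs⟩)
      h.1).choose : ℤ) : WithTop ℤ)
  else ⊤

open scoped Classical in
lemma gammaOf_ub {T : Set (W → ℤ)} {i j : W} {s : W → ℤ} (hs : s ∈ T) :
    ((s j - s i : ℤ) : WithTop ℤ) ≤ gammaOf T i j := by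
  rw [gammaOf]
  split_ifs with h
  · have hspec := (Int.exists_greatest_of_bdd
      (P := fun d => ∃ s ∈ T, s j - s i = d)
      (by obtain ⟨b, hb⟩ := h.2; exact ⟨b, fun z hz => by obtain ⟨s, hs, hsz⟩ := hz; exact hsz ▸ hb s hs⟩)
      h.1).choose_spec
    exact_mod_cast hspec.2 _ ⟨s, hs, rfl⟩
  · exact le_top

open scoped Classical in
lemma gammaOf_wit {T : Set (W → ℤ)} (hne : T.Nonempty) {i j : W} (d : ℤ)
    (hd : (d : WithTop ℤ) ≤ gammaOf T i j) : ∃ s ∈ T, d ≤ s j - s i := by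
  rw [gammaOf] at hd
  split_ifs at hd with h
  · have hspec := (Int.exists_greatest_of_bdd
      (P := fun d => ∃ s ∈ T, s j - s i = d)
      (by obtain ⟨b, hb⟩ := h.2; exact ⟨b, fun z hz => by obtain ⟨s, hs, hsz⟩ := hz; exact hsz ▸ hb s hs⟩)
      h.1).choose_spec
    obtain ⟨s, hs, hval⟩ := hspec.1
    have hdle : d ≤ _ := WithTop.coe_le_coe.mp hd
    exact ⟨s, hs, by omega⟩
  · rw [not_and_or] at h
    rcases h with h | h
    · exfalso
      obtain ⟨t, ht⟩ := hne
      exact h ⟨t j - t i, t, ht, rfl⟩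
    · push_neg at h
      obtain ⟨s, hs, hlt⟩ := h d
      exact ⟨s, hs, le_of_lt hlt⟩

end Main

/-- A nonempty `S ⊆ ℤ^V` is L♮-convex (closed under componentwise discrete midpoints)
iff it is in box–difference form. -/
theorem stmt17 {V : Type*} [Fintype V] [Nonempty V] (S : Set (V → ℤ)) (hS : S.Nonempty) :
    (∀ p ∈ S, ∀ q ∈ S, ceilMid p q ∈ S ∧ floorMid p q ∈ S) ↔
      ∃ (α : V → WithBot ℤ) (β : V → WithTop ℤ) (γ : V → V → WithTop ℤ),
        S = {p : V → ℤ | SatisfiesInt α β γ p} := by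
  constructor
  · intro hmid
    set T : Set (Option V → ℤ) := {P | (fun i => P (some i) - P none) ∈ S} with hTdef
    have hTm : MidClosed T := by
      intro P hP Q hQ
      have hp : (fun i => P (some i) - P none) ∈ S := hP
      have hq : (fun i => Q (some i) - Q none) ∈ S := hQ
      rcases Int.even_or_odd (P none + Q none) with ⟨u, hu⟩ | ⟨u, hu⟩
      · constructor
        · show (fun i => ceilMid P Q (some i) - ceilMid P Q none) ∈ S
          have he : (fun i => ceilMid P Q (some i) - ceilMid P Q none)
              = ceilMid (fun i => P (some i) - P none) (fun i => Q (some i) - Q none) := by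
            funext i
            show ⌈((P (some i) + Q (some i) : ℤ) : ℚ)/2⌉ - ⌈((P none + Q none : ℤ) : ℚ)/2⌉
              = ⌈((P (some i) - P none + (Q (some i) - Q none) : ℤ) : ℚ)/2⌉
            have h1 := cm_spec (P (some i) + Q (some i))
            have h2 := cm_spec (P none + Q none)
            have h3 := cm_spec (P (some i) - P none + (Q (some i) - Q none))
            omega
          rw [he]; exact (hmid _ hp _ hq).1
        · show (fun i => floorMid P Q (some i) - floorMid P Q none) ∈ S
          have he : (fun i => floorMid P Q (some i) - floorMid P Q none)
              = floorMid (fun i => P (some i) - P none) (fun i => Q (some i) - Q none) := by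
            funext i
            show ⌊((P (some i) + Q (some i) : ℤ) : ℚ)/2⌋ - ⌊((P none + Q none : ℤ) : ℚ)/2⌋
              = ⌊((P (some i) - P none + (Q (some i) - Q none) : ℤ) : ℚ)/2⌋
            have h1 := fm_spec (P (some i) + Q (some i))
            have h2 := fm_spec (P none + Q none)
            have h3 := fm_spec (P (some i) - P none + (Q (some i) - Q none))
            omega
          rw [he]; exact (hmid _ hp _ hq).2
      · constructor
        · show (fun i => ceilMid P Q (some i) - ceilMid P Q none) ∈ S
          have he : (fun i => ceilMid P Q (some i) - ceilMid P Q none)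
              = floorMid (fun i => P (some i) - P none) (fun i => Q (some i) - Q none) := by
            funext i
            show ⌈((P (some i) + Q (some i) : ℤ) : ℚ)/2⌉ - ⌈((P none + Q none : ℤ) : ℚ)/2⌉
              = ⌊((P (some i) - P none + (Q (some i) - Q none) : ℤ) : ℚ)/2⌋
            have h1 := cm_spec (P (some i) + Q (some i))
            have h2 := cm_spec (P none + Q none)
            have h3 := fm_spec (P (some i) - P none + (Q (some i) - Q none))
            omega
          rw [he]; exact (hmid _ hp _ hq).2
        · show (fun i => floorMid P Q (some i) - floorMid P Q none) ∈ S
          have he : (fun i => floorMid P Q (some i) - floorMid P Q none)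
              = ceilMid (fun i => P (some i) - P none) (fun i => Q (some i) - Q none) := by
            funext i
            show ⌊((P (some i) + Q (some i) : ℤ) : ℚ)/2⌋ - ⌊((P none + Q none : ℤ) : ℚ)/2⌋
              = ⌈((P (some i) - P none + (Q (some i) - Q none) : ℤ) : ℚ)/2⌉
            have h1 := fm_spec (P (some i) + Q (some i))
            have h2 := fm_spec (P none + Q none)
            have h3 := cm_spec (P (some i) - P none + (Q (some i) - Q none))
            omega
          rw [he]; exact (hmid _ hp _ hq).1
    have htr : ∀ s ∈ T, ∀ c : ℤ, (fun i => s i + c) ∈ T := by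
      intro s hs c
      show (fun i => (s (some i) + c) - (s none + c)) ∈ S
      have he : (fun i : V => (s (some i) + c) - (s none + c)) = fun i => s (some i) - s none := by
        funext i; ring
      rw [he]; exact hs
    obtain ⟨p₀, hp₀⟩ := hS
    have hneT : T.Nonempty := by
      refine ⟨fun o => o.elim 0 p₀, ?_⟩
      show (fun i : V => p₀ i - 0) ∈ S
      have he : (fun i : V => p₀ i - 0) = p₀ := by funext i; ring
      rw [he]; exact hp₀
    refine ⟨fun i => WithTop.recTopCoe ⊥ (fun a => ((-a : ℤ) : WithBot ℤ)) (gammaOf T (some i) none),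
        fun i => gammaOf T none (some i),
        fun i j => gammaOf T (some i) (some j), ?_⟩
    ext p
    simp only [Set.mem_setOf_eq]
    have hPmem : ((fun o : Option V => o.elim 0 p) ∈ T) ↔ p ∈ S := by
      show ((fun i : V => p i - 0) ∈ S) ↔ p ∈ S
      have he : (fun i : V => p i - 0) = p := by funext i; ring
      rw [he]
    constructor
    · intro hp
      have hPT : (fun o : Option V => o.elim 0 p) ∈ T := hPmem.mpr hp
      refine ⟨?_, ?_, ?_⟩
      · intro i
        have hub' : ((0 - p i : ℤ) : WithTop ℤ) ≤ gammaOf T (some i) none :=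
          gammaOf_ub (T := T) (i := some i) (j := none) hPT
        show WithTop.recTopCoe ⊥ (fun a => ((-a : ℤ) : WithBot ℤ)) (gammaOf T (some i) none)
          ≤ ((p i : ℤ) : WithBot ℤ)
        rcases hg : gammaOf T (some i) none with _ | a
        · exact bot_le
        · rw [hg] at hub'
          have h1 : (0 - p i : ℤ) ≤ a := WithTop.coe_le_coe.mp hub'
          show ((-a : ℤ) : WithBot ℤ) ≤ ((p i : ℤ) : WithBot ℤ)
          exact WithBot.coe_le_coe.mpr (by omega)
      · intro i
        have hub' : ((p i - 0 : ℤ) : WithTop ℤ) ≤ gammaOf T none (some i) :=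
          gammaOf_ub (T := T) (i := (none : Option V)) (j := some i) hPT
        simpa using hub'
      · intro i j hij
        exact gammaOf_ub (T := T) (i := some i) (j := some j) hPT
    · rintro ⟨h1, h2, h3⟩
      apply hPmem.mp
      apply lcl hTm htr hneT
      intro a b hab
      match a, b with
      | none, none => exact absurd rfl hab
      | none, some bb =>
        have hd : ((p bb : ℤ) : WithTop ℤ) ≤ gammaOf T none (some bb) := h2 bb
        obtain ⟨s, hsT, hle⟩ := gammaOf_wit hneT (p bb) hd
        refine ⟨s, hsT, ?_⟩
        show p bb - 0 ≤ s (some bb) - s none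
        omega
      | some aa, none =>
        have h1a : WithTop.recTopCoe ⊥ (fun a => ((-a : ℤ) : WithBot ℤ))
            (gammaOf T (some aa) none) ≤ ((p aa : ℤ) : WithBot ℤ) := h1 aa
        rcases hg : gammaOf T (some aa) none with _ | c
        · obtain ⟨s, hsT, hle⟩ := gammaOf_wit hneT (0 - p aa) (by rw [hg]; exact le_top)
          refine ⟨s, hsT, ?_⟩
          show 0 - p aa ≤ s none - s (some aa)
          omega
        · rw [hg] at h1a
          have hc : (-c : ℤ) ≤ p aa := WithBot.coe_le_coe.mp h1a
          obtain ⟨s, hsT, hle⟩ := gammaOf_wit hneT (0 - p aa)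
            (by rw [hg]; exact WithTop.coe_le_coe.mpr (by omega))
          refine ⟨s, hsT, ?_⟩
          show 0 - p aa ≤ s none - s (some aa)
          omega
      | some aa, some bb =>
        have hab' : aa ≠ bb := fun h => hab (by rw [h])
        obtain ⟨s, hsT, hle⟩ := gammaOf_wit hneT (p bb - p aa) (h3 aa bb hab')
        exact ⟨s, hsT, hle⟩
  · rintro ⟨α, β, γ, rfl⟩ p hp q hq
    obtain ⟨hp1, hp2, hp3⟩ := hp
    obtain ⟨hq1, hq2, hq3⟩ := hq
    constructor
    · refine ⟨?_, ?_, ?_⟩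
      · intro i
        rcases hg : α i with _ | a
        · exact bot_le
        · have hpa := hp1 i; have hqa := hq1 i
          rw [hg] at hpa hqa
          have h1 : a ≤ p i := WithBot.coe_le_coe.mp hpa
          have h2 : a ≤ q i := WithBot.coe_le_coe.mp hqa
          have hm := cm_spec (p i + q i)
          exact WithBot.coe_le_coe.mpr (show a ≤ ⌈((p i + q i : ℤ) : ℚ)/2⌉ by omega)
      · intro i
        rcases hg : β i with _ | b
        · exact le_top
        · have hpb := hp2 i; have hqb := hq2 i
          rw [hg] at hpb hqb
          have h1 : p i ≤ b := WithTop.coe_le_coe.mp hpb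
          have h2 : q i ≤ b := WithTop.coe_le_coe.mp hqb
          have hm := cm_spec (p i + q i)
          exact WithTop.coe_le_coe.mpr (show ⌈((p i + q i : ℤ) : ℚ)/2⌉ ≤ b by omega)
      · intro i j hij
        rcases hg : γ i j with _ | c
        · exact le_top
        · have hpc := hp3 i j hij; have hqc := hq3 i j hij
          rw [hg] at hpc hqc
          have h1 : p j - p i ≤ c := WithTop.coe_le_coe.mp hpc
          have h2 : q j - q i ≤ c := WithTop.coe_le_coe.mp hqc
          have hmj := cm_spec (p j + q j)
          have hmi := cm_spec (p i + q i)
          exact WithTop.coe_le_coe.mpr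
            (show ⌈((p j + q j : ℤ) : ℚ)/2⌉ - ⌈((p i + q i : ℤ) : ℚ)/2⌉ ≤ c by omega)
    · refine ⟨?_, ?_, ?_⟩
      · intro i
        rcases hg : α i with _ | a
        · exact bot_le
        · have hpa := hp1 i; have hqa := hq1 i
          rw [hg] at hpa hqa
          have h1 : a ≤ p i := WithBot.coe_le_coe.mp hpa
          have h2 : a ≤ q i := WithBot.coe_le_coe.mp hqa
          have hm := fm_spec (p i + q i)
          exact WithBot.coe_le_coe.mpr (show a ≤ ⌊((p i + q i : ℤ) : ℚ)/2⌋ by omega)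
      · intro i
        rcases hg : β i with _ | b
        · exact le_top
        · have hpb := hp2 i; have hqb := hq2 i
          rw [hg] at hpb hqb
          have h1 : p i ≤ b := WithTop.coe_le_coe.mp hpb
          have h2 : q i ≤ b := WithTop.coe_le_coe.mp hqb
          have hm := fm_spec (p i + q i)
          exact WithTop.coe_le_coe.mpr (show ⌊((p i + q i : ℤ) : ℚ)/2⌋ ≤ b by omega)
      · intro i j hij
        rcases hg : γ i j with _ | c
        · exact le_top
        · have hpc := hp3 i j hij; have hqc := hq3 i j hij
          rw [hg] at hpc hqc
          have h1 : p j - p i ≤ c := WithTop.coe_le_coe.mp hpc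
          have h2 : q j - q i ≤ c := WithTop.coe_le_coe.mp hqc
          have hmj := fm_spec (p j + q j)
          have hmi := fm_spec (p i + q i)
          exact WithTop.coe_le_coe.mpr
            (show ⌊((p j + q j : ℤ) : ℚ)/2⌋ - ⌊((p i + q i : ℤ) : ℚ)/2⌋ ≤ c by omega)
end

section
/- Let V be a finite set, E ⊆ V × V a set of ordered pairs (i, j) with i ≠ j, p ∈ ℤ^V, functions φ_i : ℤ → ℝ for i ∈ V, and convex functions ψ_ij : ℤ → ℝ for (i, j) ∈ E (i.e., ψ_ij(k−1) + ψ_ij(k+1) ≥ 2ψ_ij(k) for all k ∈ ℤ). Define g : {0, 1}^V → ℝ by g(d) = Σ_{i∈V} φ_i(p_i + d_i) + Σ_{(i,j)∈E} ψ_ij(p_j + d_j − p_i − d_i). Then g is submodular: g(d ∨ d′) + g(d ∧ d′) ≤ g(d) + g(d′) for all d, d′ ∈ {0, 1}^V, where ∨ and ∧ denote the componentwise maximum and minimum. -/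
/-!
The vertex terms are modular, since `{max, min}` is just a permutation of `{d i, d' i}`.
Each edge term is `ψ (b - a)`, a convex function of a difference, and such a function is
submodular on `ℤ²` (it is L♮-convex): with `u = b - a` and `u' = b' - a'`, the two
differences `max b b' - max a a'` and `min b b' - min a a'` have the same sum as `u, u'` and
lie between them, so discrete convexity of `ψ` bounds their `ψ`-values by those of `u, u'`.
-/

open Finset

lemma map_max_add_map_min {α M : Type*} [LinearOrder α] [AddCommMagma M] (f : α → M) (a b : α) :
    f (max a b) + f (min a b) = f a + f b := by
  rcases le_total a b with h | h
  · rw [max_eq_right h, min_eq_left h, add_comm]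
  · rw [max_eq_left h, min_eq_right h]

lemma Finset.sum_add_sum_le_sum_add_sum {ι M : Type*} [AddCommMonoid M] [PartialOrder M]
    [IsOrderedAddMonoid M] {s : Finset ι} {f g h k : ι → M}
    (H : ∀ i ∈ s, f i + g i ≤ h i + k i) :
    ∑ i ∈ s, f i + ∑ i ∈ s, g i ≤ ∑ i ∈ s, h i + ∑ i ∈ s, k i := by
  simpa only [← sum_add_distrib] using sum_le_sum H

def DiscreteConvex (ψ : ℤ → ℝ) : Prop :=
  ∀ k : ℤ, 2 * ψ k ≤ ψ (k - 1) + ψ (k + 1)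

namespace DiscreteConvex

variable {ψ : ℤ → ℝ}

lemma monotone_slope (hψ : DiscreteConvex ψ) : Monotone fun k => ψ (k + 1) - ψ k :=
  monotone_int_of_le_succ fun k => by
    have := hψ (k + 1)
    simp only [add_sub_cancel_right] at this
    linarith

lemma add_le_add_of_inward (hψ : DiscreteConvex ψ) (n : ℕ) :
    ∀ x y : ℤ, x + n ≤ y - n → ψ (x + n) + ψ (y - n) ≤ ψ x + ψ y := by
  induction n with
  | zero => simp
  | succ n ih =>
    intro x y hxy
    push_cast at hxy ⊢
    have inner := ih (x + 1) (y - 1) (by omega)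
    have outer := hψ.monotone_slope (show x ≤ y - 1 by omega)
    simp only [sub_add_cancel] at outer
    rw [show x + (n + 1) = x + 1 + n by ring, show y - (n + 1) = y - 1 - n by ring]
    linarith

lemma add_le_add_of_mem_Icc (hψ : DiscreteConvex ψ) {x y s t : ℤ}
    (hs : s ∈ Set.Icc x y) (hst : s + t = x + y) : ψ s + ψ t ≤ ψ x + ψ y := by
  obtain ⟨hxs, hsy⟩ := hs
  wlog hle : s ≤ t generalizing s t
  · rw [add_comm (ψ s)]
    exact this (by omega) (by omega) (by omega) (by omega)
  have key := hψ.add_le_add_of_inward (s - x).toNat x y (by omega)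
  rwa [show x + ((s - x).toNat : ℤ) = s by omega,
    show y - ((s - x).toNat : ℤ) = t by omega] at key

lemma submodular_sub (hψ : DiscreteConvex ψ) (a b a' b' : ℤ) :
    ψ (max b b' - max a a') + ψ (min b b' - min a a') ≤ ψ (b - a) + ψ (b' - a') := by
  wlog hle : b - a ≤ b' - a' generalizing a b a' b'
  · rw [max_comm b, max_comm a, min_comm b, min_comm a, add_comm (ψ (b - a))]
    exact this a' b' a b (by omega)
  exact hψ.add_le_add_of_mem_Icc ⟨by omega, by omega⟩ (by omega)

end DiscreteConvex

theorem stmt19_general {V : Type*} [Fintype V] (E : Finset (V × V))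
    (p : V → ℤ)
    (φ : V → ℤ → ℝ) (ψ : V × V → ℤ → ℝ)
    (hψ : ∀ e ∈ E, ∀ k : ℤ, 2 * ψ e k ≤ ψ e (k - 1) + ψ e (k + 1)) :
    ∀ d d' : V → ℤ, (∀ i, d i = 0 ∨ d i = 1) → (∀ i, d' i = 0 ∨ d' i = 1) →
      ((∑ i, φ i (p i + max (d i) (d' i))) +
          ∑ e ∈ E, ψ e (p e.2 + max (d e.2) (d' e.2) - p e.1 - max (d e.1) (d' e.1))) +
        ((∑ i, φ i (p i + min (d i) (d' i))) +
          ∑ e ∈ E, ψ e (p e.2 + min (d e.2) (d' e.2) - p e.1 - min (d e.1) (d' e.1))) ≤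
      ((∑ i, φ i (p i + d i)) + ∑ e ∈ E, ψ e (p e.2 + d e.2 - p e.1 - d e.1)) +
        ((∑ i, φ i (p i + d' i)) + ∑ e ∈ E, ψ e (p e.2 + d' e.2 - p e.1 - d' e.1)) := by
  intro d d' _ _
  rw [add_add_add_comm, add_add_add_comm (∑ i, φ i (p i + d i))]
  refine add_le_add (sum_add_sum_le_sum_add_sum fun i _ => ?_)
    (sum_add_sum_le_sum_add_sum fun e he => ?_)
  · exact (map_max_add_map_min (fun k => φ i (p i + k)) (d i) (d' i)).le
  · simpa only [max_add_add_left, min_add_add_left, sub_add_eq_sub_sub] using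
      DiscreteConvex.submodular_sub (hψ e he)
        (p e.1 + d e.1) (p e.2 + d e.2) (p e.1 + d' e.1) (p e.2 + d' e.2)

/-- The local objective `g(d) = Σ_i φ_i(p_i + d_i) + Σ_{(i,j)∈E} ψ_{ij}(p_j + d_j − p_i − d_i)`
of the steepest-descent step for discrete energy minimization, with each `ψ_{ij}` discretely
convex, is submodular on `{0,1}^V`: `g(d ∨ d′) + g(d ∧ d′) ≤ g(d) + g(d′)`. -/
theorem stmt19 {V : Type*} [Fintype V] (E : Finset (V × V))
    (hE : ∀ e ∈ E, e.1 ≠ e.2) (p : V → ℤ)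
    (φ : V → ℤ → ℝ) (ψ : V × V → ℤ → ℝ)
    (hψ : ∀ e ∈ E, ∀ k : ℤ, 2 * ψ e k ≤ ψ e (k - 1) + ψ e (k + 1)) :
    ∀ d d' : V → ℤ, (∀ i, d i = 0 ∨ d i = 1) → (∀ i, d' i = 0 ∨ d' i = 1) →
      ((∑ i, φ i (p i + max (d i) (d' i))) +
          ∑ e ∈ E, ψ e (p e.2 + max (d e.2) (d' e.2) - p e.1 - max (d e.1) (d' e.1))) +
        ((∑ i, φ i (p i + min (d i) (d' i))) +
          ∑ e ∈ E, ψ e (p e.2 + min (d e.2) (d' e.2) - p e.1 - min (d e.1) (d' e.1))) ≤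
      ((∑ i, φ i (p i + d i)) + ∑ e ∈ E, ψ e (p e.2 + d e.2 - p e.1 - d e.1)) +
        ((∑ i, φ i (p i + d' i)) + ∑ e ∈ E, ψ e (p e.2 + d' e.2 - p e.1 - d' e.1)) :=
  stmt19_general E p φ ψ hψ
end
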